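/- arXiv:1909.02863 — 5 statements merged into one kernel-verified Lean document; each statement's English description precedes it below -/
import Mathlib

section
/- In the single-node-per-network stage game with slot lengths σ_S = σ_C = 1+β and σ_I = β for β > 0, and initial age Δ = 1+β, the strategy profiles (T,T), (T,I), and (I,T) are all pure-strategy Nash equilibria, where the AON's payoff is minus the expected age at the end of the slot and the TON's payoff is the expected throughput σ_S·1{only TON transmits}. -/
/-- Single-node stage game: (T,T), (T,I), (I,T) are pure Nash equilibria. -/
theorem stmt_0 (β : ℝ) (hβ : 0 < β) :
    let Δ : ℝ := 1 + β
    let σS : ℝ := 1 + β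
    let σC : ℝ := 1 + β
    let σI : ℝ := β
    let uA : Bool → Bool → ℝ := fun a t =>
      -(if a && t then Δ + σC else if a then σS else if t then Δ + σS else Δ + σI)
    let uT : Bool → Bool → ℝ := fun a t => if t && !a then σS else 0
    ((∀ a' : Bool, uA a' true ≤ uA true true) ∧ (∀ t' : Bool, uT true t' ≤ uT true true)) ∧
    ((∀ a' : Bool, uA a' false ≤ uA true false) ∧ (∀ t' : Bool, uT true t' ≤ uT true false)) ∧
    ((∀ a' : Bool, uA a' true ≤ uA false true) ∧ (∀ t' : Bool, uT false t' ≤ uT false true)) := by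
  refine ⟨⟨fun x => ?_, fun x => ?_⟩, ⟨fun x => ?_, fun x => ?_⟩, ⟨fun x => ?_, fun x => ?_⟩⟩ <;> cases x <;> simp <;> linarith
end

section
/- Consider the AON expected age function f(τ_A) = (1 − τ_A(1−τ_A)^{N_A−1}(1−τ_T)^{N_T})·Δ + (1−τ_A)^{N_A}(1−τ_T)^{N_T}(σ_I−σ_C) + σ_C + (N_A τ_A(1−τ_A)^{N_A−1}(1−τ_T)^{N_T} + N_T τ_T(1−τ_T)^{N_T−1}(1−τ_A)^{N_A})(σ_S−σ_C). When σ_S = σ_C and Δ ≤ N_A(σ_S − σ_I), f is minimized on [0,1] at τ_A = 0. -/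
lemma aux_pow_ineq : ∀ n : ℕ, 1 ≤ n → ∀ x : ℝ, 0 ≤ x → x ≤ 1 →
    (n : ℝ) * (1 - x) * x ^ (n - 1) ≤ 1 - x ^ n := by
  intro n hn
  induction n, hn using Nat.le_induction with
  | base => intro x hx0 hx1; simp
  | succ n hn IH =>
    intro x hx0 hx1
    have IH' := IH x hx0 hx1
    have hxx : x ^ n = x * x ^ (n - 1) := by
      rw [← pow_succ']
      congr 1
      omega
    have h1 : x * ((n : ℝ) * (1 - x) * x ^ (n - 1)) ≤ x * (1 - x ^ n) :=
      mul_le_mul_of_nonneg_left IH' hx0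
    have h3 : x ^ n ≤ 1 := pow_le_one₀ hx0 hx1
    have hxp : (0:ℝ) ≤ x ^ n := pow_nonneg hx0 n
    have h1' : (n : ℝ) * (1 - x) * x ^ n ≤ x - x * x ^ n := by
      calc (n : ℝ) * (1 - x) * x ^ n = x * ((n : ℝ) * (1 - x) * x ^ (n - 1)) := by
            rw [hxx]; ring
        _ ≤ x * (1 - x ^ n) := h1
        _ = x - x * x ^ n := by ring
    have h2' : (1 - x) * x ^ n ≤ 1 - x := by
      nlinarith [mul_nonneg (sub_nonneg.2 hx1) (sub_nonneg.2 h3)]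
    have hps : x ^ (n + 1) = x * x ^ n := by ring
    push_cast
    nlinarith [h1', h2', hps]

/-- When σ_S = σ_C and Δ ≤ N_A(σ_S − σ_I), the AON expected age is minimized at τ_A = 0. -/
theorem stmt_3 (NA NT : ℕ) (hNA : 1 ≤ NA) (hNT : 1 ≤ NT)
    (τT σI σS σC Δ : ℝ) (hτT : τT ∈ Set.Ico (0:ℝ) 1)
    (hσI : 0 < σI) (hσIS : σI < σS) (hSC : σS = σC) (hΔ : 0 < Δ)
    (hΔle : Δ ≤ NA * (σS - σI)) :
    let f : ℝ → ℝ := fun τA =>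
      (1 - τA * (1 - τA) ^ (NA - 1) * (1 - τT) ^ NT) * Δ
        + (1 - τA) ^ NA * (1 - τT) ^ NT * (σI - σC) + σC
        + (NA * τA * (1 - τA) ^ (NA - 1) * (1 - τT) ^ NT
            + NT * τT * (1 - τT) ^ (NT - 1) * (1 - τA) ^ NA) * (σS - σC)
    IsMinOn f (Set.Icc (0:ℝ) 1) 0 := by
  intro f
  rw [isMinOn_iff]
  intro x hx
  obtain ⟨hx0, hx1⟩ := hx
  obtain ⟨hτ0, hτ1⟩ := hτT
  subst hSC
  have key := aux_pow_ineq NA hNA (1 - x) (by linarith) (by linarith)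
  -- key : NA * x * (1-x)^(NA-1) ≤ 1 - (1-x)^NA  (after simplifying 1 - (1-x) = x)
  have hk : (NA : ℝ) * x * (1 - x) ^ (NA - 1) ≤ 1 - (1 - x) ^ NA := by
    have : (1 : ℝ) - (1 - x) = x := by ring
    rw [this] at key
    linarith [key]
  have hc : (0:ℝ) < σS - σI := by linarith
  have ht : (0:ℝ) ≤ (1 - τT) ^ NT := pow_nonneg (by linarith) NT
  have hA : (0:ℝ) ≤ x * (1 - x) ^ (NA - 1) :=
    mul_nonneg hx0 (pow_nonneg (by linarith) (NA - 1))
  -- x (1-x)^{NA-1} Δ ≤ x (1-x)^{NA-1} NA (σS - σI) ≤ (1 - (1-x)^NA)(σS - σI)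
  have h1 : x * (1 - x) ^ (NA - 1) * Δ ≤ x * (1 - x) ^ (NA - 1) * ((NA : ℝ) * (σS - σI)) :=
    mul_le_mul_of_nonneg_left hΔle hA
  have h2 : (NA : ℝ) * x * (1 - x) ^ (NA - 1) * (σS - σI)
      ≤ (1 - (1 - x) ^ NA) * (σS - σI) :=
    mul_le_mul_of_nonneg_right hk (le_of_lt hc)
  have h3 : x * (1 - x) ^ (NA - 1) * Δ ≤ (1 - (1 - x) ^ NA) * (σS - σI) := by
    nlinarith [h1, h2]
  have h4 : (0:ℝ) ≤ (1 - τT) ^ NT *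
      ((1 - (1 - x) ^ NA) * (σS - σI) - x * (1 - x) ^ (NA - 1) * Δ) :=
    mul_nonneg ht (by linarith)
  show f 0 ≤ f x
  simp only [f]
  ring_nf
  nlinarith [h4]
end

section
/- When σ_S = σ_C, the minimizer of the AON expected age function f(τ_A) over [0,1] is independent of τ_T ∈ [0,1) and of N_T; that is, the optimal access probability τ_A* of the AON is a dominant strategy. -/
lemma aux_min_affine (c k : ℝ) (hc : 0 < c) (g F : ℝ → ℝ)
    (hF : ∀ x, F x = c * g x + k) (s : Set ℝ) (a : ℝ) :
    IsMinOn F s a ↔ IsMinOn g s a := by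
  rw [isMinOn_iff, isMinOn_iff]
  constructor <;> intro h y hy <;> have hy' := h y hy <;> rw [hF, hF] at * <;> nlinarith

/-- When σ_S = σ_C, the argmin set of the AON expected age on [0,1] is independent of
τ_T and N_T (dominant strategy). -/
theorem stmt_5 (NA : ℕ) (hNA : 1 ≤ NA)
    (σI σS σC Δ : ℝ) (hσI : 0 < σI) (hσIS : σI < σS) (hSC : σS = σC) (hΔ : 0 < Δ)
    (τT τT' : ℝ) (hτT : τT ∈ Set.Ico (0:ℝ) 1) (hτT' : τT' ∈ Set.Ico (0:ℝ) 1)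
    (NT NT' : ℕ) (hNT : 1 ≤ NT) (hNT' : 1 ≤ NT') :
    let f : ℝ → ℕ → ℝ → ℝ := fun t n τA =>
      (1 - τA * (1 - τA) ^ (NA - 1) * (1 - t) ^ n) * Δ
        + (1 - τA) ^ NA * (1 - t) ^ n * (σI - σC) + σC
    {τA ∈ Set.Icc (0:ℝ) 1 | IsMinOn (f τT NT) (Set.Icc (0:ℝ) 1) τA} =
      {τA ∈ Set.Icc (0:ℝ) 1 | IsMinOn (f τT' NT') (Set.Icc (0:ℝ) 1) τA} := by
  intro f
  set g : ℝ → ℝ := fun x => -(x * (1 - x) ^ (NA - 1)) * Δ + (1 - x) ^ NA * (σI - σC)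
    with hg
  have key : ∀ t : ℝ, t ∈ Set.Ico (0:ℝ) 1 → ∀ n : ℕ, ∀ a : ℝ,
      IsMinOn (f t n) (Set.Icc (0:ℝ) 1) a ↔ IsMinOn g (Set.Icc (0:ℝ) 1) a := by
    intro t ht n a
    have hc : 0 < (1 - t) ^ n := pow_pos (by linarith [ht.2]) n
    exact aux_min_affine _ (Δ + σC) hc g (f t n)
      (fun x => by simp only [f, hg]; ring) _ a
  ext τA
  simp only [Set.mem_setOf_eq, key τT hτT NT, key τT' hτT' NT']
end

section
/- For the cooperative one-shot game, the AON-side expected age g(τ_A) = (1 − P_R·τ_A(1−τ_A)^{N_A−1})Δ + σ_C + (P_R(1−τ_A)^{N_A} + (1−P_R)(1−τ_T)^{N_T})(σ_I−σ_C) + ((1−P_R)N_T τ_T(1−τ_T)^{N_T−1} + P_R N_A τ_A(1−τ_A)^{N_A−1})(σ_S−σ_C), with σ_S = σ_C and P_R ∈ (0,1], is minimized over τ_A ∈ [0,1] at τ_A = 0 if Δ ≤ N_A(σ_S−σ_I) and at τ_A = (N_A(σ_I−σ_S)+Δ)/(N_A(σ_I−σ_C+Δ)) if Δ > N_A(σ_S−σ_I).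 -/
lemma keyK (m : ℕ) (x : ℝ) (hx : 0 ≤ x) :
    ((m:ℝ)+1) * x^m ≤ 1 + (m:ℝ) * x^(m+1) := by
  induction m with
  | zero => simp
  | succ k ih =>
    have hfac : 0 ≤ (1 - x) * (1 - x^(k+1)) := by
      rcases le_or_gt x 1 with h | h
      · exact mul_nonneg (by linarith) (by nlinarith [pow_le_one₀ hx h (n := k+1)])
      · have : 1 ≤ x^(k+1) := one_le_pow₀ h.le
        exact mul_nonneg_iff.mpr (Or.inr ⟨by linarith, by linarith⟩)
    have hmul := mul_le_mul_of_nonneg_left ih hx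
    push_cast
    push_cast at ih hmul
    nlinarith [pow_nonneg hx k, pow_nonneg hx (k+1), pow_succ x k, pow_succ x (k+1)]

lemma keyK2 (m : ℕ) (a w : ℝ) (ha : 0 < a) (hw : 0 ≤ w) :
    w^m * (((m:ℝ)+1)*a - w) ≤ ((m:ℝ)*a)^m * a := by
  cases m with
  | zero => simp; linarith
  | succ k =>
    have hc : (0:ℝ) < ((k:ℝ)+1)*a := by positivity
    set x := w / (((k:ℝ)+1)*a) with hxdef
    have hx : 0 ≤ x := div_nonneg hw hc.le
    have hwx : w = ((k:ℝ)+1)*a*x := by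
      rw [hxdef]; field_simp
    have hK := keyK (k+1) x hx
    rw [pow_succ x (k+1)] at hK
    push_cast at hK
    have hKK : x^(k+1) * (((k:ℝ)+2) - ((k:ℝ)+1)*x) ≤ 1 := by nlinarith [hK]
    have hCpos : (0:ℝ) < (((k:ℝ)+1)*a)^(k+1) * a := by positivity
    have heq : (((k:ℝ)+1)*a*x)^(k+1) * ((((k+1:ℕ)):ℝ)+1)*a - (((k:ℝ)+1)*a*x) = 0 → True := fun _ => trivial
    rw [hwx]
    push_cast
    have hgoal : (((k:ℝ)+1)*a*x)^(k+1) * ((((k:ℝ)+1)+1)*a - ((k:ℝ)+1)*a*x)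
        = ((((k:ℝ)+1)*a)^(k+1) * a) * (x^(k+1) * (((k:ℝ)+2) - ((k:ℝ)+1)*x)) := by
      rw [mul_pow]; ring
    rw [hgoal]
    calc ((((k:ℝ)+1)*a)^(k+1) * a) * (x^(k+1) * (((k:ℝ)+2) - ((k:ℝ)+1)*x))
        ≤ ((((k:ℝ)+1)*a)^(k+1) * a) * 1 := mul_le_mul_of_nonneg_left hKK hCpos.le
      _ = (((k:ℝ)+1)*a)^(k+1) * a := mul_one _

lemma core1 (m : ℕ) (Δ s : ℝ) (hΔ : 0 < Δ) (hs : 0 < s)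
    (hle : Δ ≤ ((m:ℝ)+1)*s) (τ : ℝ) (hτ0 : 0 ≤ τ) (hτ1 : τ ≤ 1) :
    (1-τ)^m * (τ*Δ + (1-τ)*s) ≤ s := by
  have hu0 : (0:ℝ) ≤ 1 - τ := by linarith
  have hK := keyK m (1-τ) hu0
  have hK' : (m:ℝ)*((1-τ)^m) - (m:ℝ)*((1-τ)^(m+1)) ≤ 1 - (1-τ)^m := by linarith
  have h1 := mul_le_mul_of_nonneg_left hK' hs.le
  have hAB : (1-τ)^(m+1) ≤ (1-τ)^m :=
    pow_le_pow_of_le_one hu0 (by linarith) (Nat.le_succ m)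
  have h2 : 0 ≤ ((m:ℝ)*s - (Δ - s)) * ((1-τ)^m - (1-τ)^(m+1)) :=
    mul_nonneg (by linarith) (by linarith)
  have hF : (1-τ)^m * (τ*Δ + (1-τ)*s)
      = (1-τ)^m*Δ - (1-τ)^(m+1)*Δ + (1-τ)^(m+1)*s := by
    rw [pow_succ]; ring
  rw [hF]
  nlinarith [h1, h2]

lemma core2 (m : ℕ) (Δ s : ℝ) (hΔ : 0 < Δ) (hs : 0 < s)
    (hgt : ((m:ℝ)+1)*s < Δ) (τ : ℝ) (hτ0 : 0 ≤ τ) (hτ1 : τ ≤ 1) :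
    (1-τ)^m * (τ*Δ + (1-τ)*s) ≤
      (1 - (Δ - ((m:ℝ)+1)*s)/(((m:ℝ)+1)*(Δ-s)))^m *
        ((Δ - ((m:ℝ)+1)*s)/(((m:ℝ)+1)*(Δ-s))*Δ
          + (1 - (Δ - ((m:ℝ)+1)*s)/(((m:ℝ)+1)*(Δ-s)))*s) := by
  have hm0 : (0:ℝ) ≤ (m:ℝ) := Nat.cast_nonneg m
  have hb : 0 < Δ - s := by nlinarith
  have hd : (0:ℝ) < ((m:ℝ)+1)*(Δ-s) := by positivity
  set T : ℝ := (Δ - ((m:ℝ)+1)*s)/(((m:ℝ)+1)*(Δ-s)) with hTdef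
  have hT : ((m:ℝ)+1)*(Δ-s)*(1 - T) = (m:ℝ)*Δ := by
    rw [hTdef]; field_simp; ring
  have hgen : ∀ x:ℝ, ((((m:ℝ)+1)*(Δ-s))^m*((m:ℝ)+1)) * ((1-x)^m*(x*Δ+(1-x)*s))
      = (((m:ℝ)+1)*(Δ-s)*(1-x))^m * (((m:ℝ)+1)*Δ - ((m:ℝ)+1)*(Δ-s)*(1-x)) := by
    intro x; simp only [mul_pow]; ring
  have hpos : (0:ℝ) < (((m:ℝ)+1)*(Δ-s))^m*((m:ℝ)+1) := by positivity
  refine le_of_mul_le_mul_left ?_ hpos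
  have hkey := keyK2 m Δ (((m:ℝ)+1)*(Δ-s)*(1-τ)) hΔ
    (mul_nonneg hd.le (by linarith))
  calc ((((m:ℝ)+1)*(Δ-s))^m*((m:ℝ)+1)) * ((1-τ)^m*(τ*Δ+(1-τ)*s))
      = (((m:ℝ)+1)*(Δ-s)*(1-τ))^m * (((m:ℝ)+1)*Δ - ((m:ℝ)+1)*(Δ-s)*(1-τ)) := hgen τ
    _ ≤ ((m:ℝ)*Δ)^m * Δ := hkey
    _ = (((m:ℝ)+1)*(Δ-s)*(1-T))^m * (((m:ℝ)+1)*Δ - ((m:ℝ)+1)*(Δ-s)*(1-T)) := by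
        rw [hT]; ring
    _ = ((((m:ℝ)+1)*(Δ-s))^m*((m:ℝ)+1)) * ((1-T)^m*(T*Δ+(1-T)*s)) := (hgen T).symm

/-- Cooperative one-shot game with σ_S = σ_C: the AON expected age g is minimized at
τ_A = 0 when Δ ≤ N_A(σ_S−σ_I) and at the interior point when Δ > N_A(σ_S−σ_I). -/
theorem stmt_10 (NA NT : ℕ) (hNA : 1 ≤ NA) (hNT : 1 ≤ NT)
    (τT PR σI σS σC Δ : ℝ) (hτT : τT ∈ Set.Icc (0:ℝ) 1) (hPR : PR ∈ Set.Ioc (0:ℝ) 1)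
    (hσI : 0 < σI) (hσIS : σI < σS) (hSC : σS = σC) (hΔ : 0 < Δ) :
    let g : ℝ → ℝ := fun τA =>
      (1 - PR * τA * (1 - τA) ^ (NA - 1)) * Δ + σC
        + (PR * (1 - τA) ^ NA + (1 - PR) * (1 - τT) ^ NT) * (σI - σC)
        + ((1 - PR) * (NT * τT * (1 - τT) ^ (NT - 1))
            + PR * (NA * τA * (1 - τA) ^ (NA - 1))) * (σS - σC)
    (Δ ≤ NA * (σS - σI) → IsMinOn g (Set.Icc (0:ℝ) 1) 0) ∧
      (Δ > NA * (σS - σI) →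
        IsMinOn g (Set.Icc (0:ℝ) 1) ((NA * (σI - σS) + Δ) / (NA * (σI - σC + Δ)))) := by
  intro g
  obtain ⟨hPR0, hPR1⟩ := hPR
  obtain ⟨m, rfl⟩ : ∃ m, NA = m + 1 := ⟨NA - 1, (Nat.succ_pred_eq_of_pos hNA).symm⟩
  subst hSC
  have hs : 0 < σS - σI := by linarith
  have hg : ∀ τ, g τ = (Δ + σS + (1 - PR) * (1 - τT) ^ NT * (σI - σS))
      - PR * ((1-τ)^m * (τ*Δ + (1-τ)*(σS - σI))) := by
    intro τ
    simp only [g, Nat.add_sub_cancel, pow_succ]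
    push_cast
    ring
  constructor
  · intro hle
    rw [isMinOn_iff]
    intro τ hτ
    obtain ⟨hτ0, hτ1⟩ := hτ
    have hle' : Δ ≤ ((m:ℝ)+1) * (σS - σI) := by push_cast at hle; linarith
    have h := core1 m Δ (σS - σI) hΔ hs hle' τ hτ0 hτ1
    have h0 : (1-(0:ℝ))^m * (0*Δ + (1-0)*(σS - σI)) = σS - σI := by norm_num
    rw [hg, hg, h0]
    nlinarith [mul_le_mul_of_nonneg_left h hPR0.le]
  · intro hgt
    rw [isMinOn_iff]
    intro τ hτ
    obtain ⟨hτ0, hτ1⟩ := hτ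
    have hgt' : ((m:ℝ)+1) * (σS - σI) < Δ := by push_cast at hgt; linarith
    have h := core2 m Δ (σS - σI) hΔ hs hgt' τ hτ0 hτ1
    have hP : ((((m+1:ℕ)):ℝ) * (σI - σS) + Δ) / ((((m+1:ℕ)):ℝ) * (σI - σS + Δ))
        = (Δ - ((m:ℝ)+1)*(σS - σI))/(((m:ℝ)+1)*(Δ-(σS - σI))) := by
      push_cast; ring_nf
    rw [hg, hg, hP]
    nlinarith [mul_le_mul_of_nonneg_left h hPR0.le]
end

section
/- The optimal cooperative AON access probability, when interior, does not depend on P_R: for σ_S = σ_C, Δ > N_A(σ_S−σ_I), and any P_R, P_R' ∈ (0,1], the minimizers over τ_A ∈ [0,1] of g(τ_A; P_R) and g(τ_A; P_R') coincide. -/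
/-- The optimal cooperative AON access probability does not depend on P_R: the argmin
sets of g(·;P_R) and g(·;P_R') on [0,1] coincide. -/
theorem stmt_11 (NA NT : ℕ) (hNA : 1 ≤ NA) (hNT : 1 ≤ NT)
    (τT σI σS σC Δ : ℝ) (hτT : τT ∈ Set.Icc (0:ℝ) 1)
    (hσI : 0 < σI) (hσIS : σI < σS) (hSC : σS = σC) (hΔ : 0 < Δ)
    (hΔgt : Δ > NA * (σS - σI))
    (PR PR' : ℝ) (hPR : PR ∈ Set.Ioc (0:ℝ) 1) (hPR' : PR' ∈ Set.Ioc (0:ℝ) 1) :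
    let g : ℝ → ℝ → ℝ := fun p τA =>
      (1 - p * τA * (1 - τA) ^ (NA - 1)) * Δ + σC
        + (p * (1 - τA) ^ NA + (1 - p) * (1 - τT) ^ NT) * (σI - σC)
    {τA ∈ Set.Icc (0:ℝ) 1 | IsMinOn (g PR) (Set.Icc (0:ℝ) 1) τA} =
      {τA ∈ Set.Icc (0:ℝ) 1 | IsMinOn (g PR') (Set.Icc (0:ℝ) 1) τA} := by
  intro g
  have key : ∀ p τ x : ℝ, g p τ - g p x = p * (g 1 τ - g 1 x) := by
    intro p τ x
    simp only [g]
    ring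
  ext τ
  simp only [Set.mem_setOf_eq, isMinOn_iff]
  constructor
  · rintro ⟨hτ, hmin⟩
    refine ⟨hτ, fun x hx => ?_⟩
    have h1 := hmin x hx
    have hK : g 1 τ - g 1 x ≤ 0 := by
      nlinarith [key PR τ x, hPR.1]
    nlinarith [key PR' τ x, hPR'.1]
  · rintro ⟨hτ, hmin⟩
    refine ⟨hτ, fun x hx => ?_⟩
    have h1 := hmin x hx
    have hK : g 1 τ - g 1 x ≤ 0 := by
      nlinarith [key PR' τ x, hPR'.1]
    nlinarith [key PR τ x, hPR.1]
end
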